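/- arXiv:1606.01182 — 2 statements merged into one kernel-verified Lean document; each statement's English description precedes it below -/
import Mathlib

section
/- Let G be a group, let (H_i)_{i<ω} be a sequence of subgroups of G, and let (g_i)_{i<ω} be elements of G such that g_i ∈ H_j if and only if i ≠ j. Let n < ω, and for every I ⊆ {0,…,n-1} let d_I be the product of the g_i for i ∈ I in increasing order. Then for every I ⊆ {0,…,n-1} and every j < n: if j ∉ I then d_I ∈ H_j, and if j ∈ I then d_I ∈ H_j g_j H_j, hence d_I ∉ H_j. -/
theorem stmt2 {G : Type*} [Group G] (H : ℕ → Subgroup G) (g : ℕ → G)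
    (hyp : ∀ i j, g i ∈ H j ↔ i ≠ j) :
    ∀ I : Finset ℕ, ∀ j,
      (j ∉ I → ((I.sort (· ≤ ·)).map g).prod ∈ H j) ∧
      (j ∈ I →
        (∃ h₁ ∈ H j, ∃ h₂ ∈ H j, ((I.sort (· ≤ ·)).map g).prod = h₁ * g j * h₂) ∧
        ((I.sort (· ≤ ·)).map g).prod ∉ H j) := by
  have prodmem : ∀ (j : ℕ) (l : List ℕ), (∀ i ∈ l, i ≠ j) → ((l.map g).prod ∈ H j) := by
    intro j l hl
    apply Subgroup.list_prod_mem
    intro x hx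
    simp only [List.mem_map] at hx
    obtain ⟨i, hi, rfl⟩ := hx
    exact (hyp i j).2 (hl i hi)
  intro I j
  refine ⟨fun hj => prodmem j _ ?_, fun hj => ?_⟩
  · intro i hi
    rintro rfl
    exact hj ((Finset.mem_sort _).1 hi)
  · set L₁ := (I.filter (· < j)).sort (· ≤ ·) with hL₁
    set L₂ := (I.filter (j < ·)).sort (· ≤ ·) with hL₂
    have mem₁ : ∀ a, a ∈ L₁ ↔ a ∈ I ∧ a < j := by
      intro a; simp [hL₁, Finset.mem_sort, Finset.mem_filter]
    have mem₂ : ∀ a, a ∈ L₂ ↔ a ∈ I ∧ j < a := by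
      intro a; simp [hL₂, Finset.mem_sort, Finset.mem_filter]
    have key : I.sort (· ≤ ·) = L₁ ++ j :: L₂ := by
      refine (fun hp h1 h2 => @List.Perm.eq_of_pairwise' _ (· ≤ ·) ⟨fun _ _ => Nat.le_antisymm⟩ _ _ h1 h2 hp) ?_ ?_ ?_
      · rw [List.perm_ext_iff_of_nodup (Finset.sort_nodup _ _)]
        · intro a
          simp only [Finset.mem_sort, List.mem_append, List.mem_cons, mem₁, mem₂]
          constructor
          · intro ha
            rcases lt_trichotomy a j with h | h | h
            · exact Or.inl ⟨ha, h⟩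
            · exact Or.inr (Or.inl h)
            · exact Or.inr (Or.inr ⟨ha, h⟩)
          · rintro (⟨h, _⟩ | rfl | ⟨h, _⟩) <;> first | exact h | exact hj
        · apply List.Nodup.append (Finset.sort_nodup _ _)
          · refine List.nodup_cons.2 ⟨fun h => ?_, Finset.sort_nodup _ _⟩
            exact absurd ((mem₂ j).1 h).2 (lt_irrefl j)
          · intro a ha hb
            rcases List.mem_cons.1 hb with rfl | hb
            · exact absurd ((mem₁ a).1 ha).2 (lt_irrefl a)
            · exact absurd (((mem₂ a).1 hb).2.trans ((mem₁ a).1 ha).2) (lt_irrefl j)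
      · exact Finset.pairwise_sort _ _
      · rw [List.pairwise_append]
        refine ⟨Finset.pairwise_sort _ _, ?_, ?_⟩
        · rw [List.pairwise_cons]
          exact ⟨fun b hb => le_of_lt ((mem₂ b).1 hb).2, Finset.pairwise_sort _ _⟩
        · intro a ha b hb
          rcases List.mem_cons.1 hb with rfl | hb
          · exact le_of_lt ((mem₁ a).1 ha).2
          · exact le_of_lt (((mem₁ a).1 ha).2.trans ((mem₂ b).1 hb).2)
    have h₁ : (L₁.map g).prod ∈ H j := by
      apply prodmem
      intro i hi; exact Nat.ne_of_lt ((mem₁ i).1 hi).2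
    have h₂ : (L₂.map g).prod ∈ H j := by
      apply prodmem
      intro i hi; exact (Nat.ne_of_lt ((mem₂ i).1 hi).2).symm
    have hprod : ((I.sort (· ≤ ·)).map g).prod
        = (L₁.map g).prod * g j * (L₂.map g).prod := by
      rw [key]; simp [mul_assoc]
    refine ⟨⟨_, h₁, _, h₂, hprod⟩, fun hmem => ?_⟩
    rw [hprod] at hmem
    have : g j ∈ H j := by
      have := (H j).mul_mem ((H j).mul_mem ((H j).inv_mem h₁) hmem) ((H j).inv_mem h₂)
      simpa [mul_assoc] using this
    exact (hyp j j).1 this rfl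
end

section
/- A formula φ(x;y) has the independence property witnessed on a group if there exist a group G, subgroups (H_i)_{i<ω}, elements (g_i)_{i<ω} with g_i ∈ H_j ↔ i ≠ j, such that setting d_I = ∏_{i∈I} g_i (increasing order) for finite I ⊆ ω, the membership pattern d_I ∈ H_j ↔ j ∉ I holds for all finite I and all j < ω. Prove that this membership pattern indeed holds: for every finite I ⊆ ω and every j < ω, d_I ∈ H_j if and only if j ∉ I — under the additional assumption that for each j, the set H_j · g_j · H_j is disjoint from H_j. -/
/-!
Write `d_I = a * g_j * b`, where `a` and `b` are products of generators `g_i` with `i ≠ j`, hence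
lie in `H_j`. Cancelling them, `d_I ∈ H_j ↔ g_j ∈ H_j`, which fails when `j ∈ I`; when `j ∉ I`
every factor of `d_I` lies in `H_j`.
-/

namespace Subgroup

variable {ι G : Type*} [Group G] (K : Subgroup G) {f : ι → G}

theorem list_prod_map_mem {l : List ι} (hf : ∀ i ∈ l, f i ∈ K) : (l.map f).prod ∈ K :=
  K.list_prod_mem (by simpa using hf)

theorem list_prod_map_mem_iff_of_nodup {l : List ι} (hl : l.Nodup) {j : ι} (hj : j ∈ l)
    (hf : ∀ i ∈ l, i ≠ j → f i ∈ K) : (l.map f).prod ∈ K ↔ f j ∈ K := by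
  obtain ⟨a, b, rfl⟩ := List.append_of_mem hj
  have hj_notMem : j ∉ a ++ b := (List.nodup_cons.mp (List.nodup_middle.mp hl)).1
  have hab : ∀ i ∈ a ++ b, f i ∈ K := fun i hi =>
    hf i (List.mem_append.mpr ((List.mem_append.mp hi).imp_right (List.mem_cons_of_mem j)))
      fun h => hj_notMem (h ▸ hi)
  have ha := K.list_prod_map_mem fun i hi => hab i (List.mem_append_left b hi)
  have hb := K.list_prod_map_mem fun i hi => hab i (List.mem_append_right a hi)
  rw [List.map_append, List.prod_append, List.map_cons, List.prod_cons,
    K.mul_mem_cancel_left ha, K.mul_mem_cancel_right hb]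

end Subgroup

theorem stmt8_general {G : Type*} [Group G] (H : ℕ → Subgroup G) (g : ℕ → G)
    (hyp : ∀ i j, g i ∈ H j ↔ i ≠ j) :
    ∀ I : Finset ℕ, ∀ j, ((I.sort (· ≤ ·)).map g).prod ∈ H j ↔ j ∉ I := by
  intro I j
  by_cases hj : j ∈ I
  · rw [(H j).list_prod_map_mem_iff_of_nodup (I.sort_nodup _) ((I.mem_sort _).mpr hj)
      fun i _ hij => (hyp i j).mpr hij, hyp]
    simp [hj]
  · simpa [hj] using (H j).list_prod_map_mem fun i hi =>
      (hyp i j).mpr fun hij => hj (hij ▸ (I.mem_sort _).mp hi)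

theorem stmt8 {G : Type*} [Group G] (H : ℕ → Subgroup G) (g : ℕ → G)
    (hyp : ∀ i j, g i ∈ H j ↔ i ≠ j)
    (hdisj : ∀ j, ∀ h₁ ∈ H j, ∀ h₂ ∈ H j, h₁ * g j * h₂ ∉ H j) :
    ∀ I : Finset ℕ, ∀ j, ((I.sort (· ≤ ·)).map g).prod ∈ H j ↔ j ∉ I :=
  stmt8_general H g hyp
end
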